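/- arXiv:1804.07417 — 2 statements merged into one kernel-verified Lean document; each statement's English description precedes it below -/
import Mathlib

section
/- Let σ be the linear map on ℂ^N (with standard basis v₁,…,v_N) defined by σ(v_i) = v_{i+1} for 1 ≤ i ≤ N-2, σ(v_{N-1}) = -v₁, and σ(v_N) = -v_N. Then σ has order h = 2N-2 (for N ≥ 3), and its eigenvalues are η^{m_i} where η = e^{2πi/h}, m_i = 2i-1 for 1 ≤ i ≤ N-1, and m_N = N-1. -/
lemma DN_apply {N : ℕ} (hN : 3 ≤ N) (v : Fin N → ℂ) (j : Fin N) :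
    (Matrix.toLin' (Matrix.of fun j i : Fin N =>
      if (i : ℕ) < N - 2 ∧ (j : ℕ) = (i : ℕ) + 1 then (1 : ℂ)
      else if (i : ℕ) = N - 2 ∧ (j : ℕ) = 0 then -1
      else if (i : ℕ) = N - 1 ∧ (j : ℕ) = N - 1 then -1 else 0)) v j =
    if (j : ℕ) = 0 then -v ⟨N - 2, by omega⟩
    else if (j : ℕ) = N - 1 then -v j
    else v ⟨(j : ℕ) - 1, by omega⟩ := by
  have key : (Matrix.toLin' (Matrix.of fun j i : Fin N =>
      if (i : ℕ) < N - 2 ∧ (j : ℕ) = (i : ℕ) + 1 then (1 : ℂ)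
      else if (i : ℕ) = N - 2 ∧ (j : ℕ) = 0 then -1
      else if (i : ℕ) = N - 1 ∧ (j : ℕ) = N - 1 then -1 else 0)) v j =
      ∑ i : Fin N, (if (i : ℕ) < N - 2 ∧ (j : ℕ) = (i : ℕ) + 1 then v i
      else if (i : ℕ) = N - 2 ∧ (j : ℕ) = 0 then -v i
      else if (i : ℕ) = N - 1 ∧ (j : ℕ) = N - 1 then -v i else 0) := by
    rw [Matrix.toLin'_apply]
    simp only [Matrix.mulVec, dotProduct, Matrix.of_apply]
    refine Finset.sum_congr rfl fun i _ => ?_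
    split_ifs <;> ring
  rw [key]
  by_cases hj0 : (j : ℕ) = 0
  · rw [if_pos hj0]
    rw [Finset.sum_eq_single (⟨N - 2, by omega⟩ : Fin N)]
    · simp only [Fin.val_mk]
      split_ifs <;> first | rfl | (exfalso; omega) | (exfalso; simp only [true_and] at *; omega) | (exfalso; simp only [true_and] at *; omega)
    · intro b _ hb
      have hb' : ¬ (b : ℕ) = N - 2 := by simpa [Fin.ext_iff] using hb
      split_ifs <;> first | rfl | (exfalso; omega) | (exfalso; simp only [true_and] at *; omega)
    · simp
  · by_cases hjN : (j : ℕ) = N - 1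
    · rw [if_neg hj0, if_pos hjN]
      rw [Finset.sum_eq_single j]
      · have hjlt : (j : ℕ) < N := j.isLt
        split_ifs <;> first | rfl | (exfalso; omega) | (exfalso; simp only [true_and] at *; omega)
      · intro b _ hb
        have hb' : ¬ (b : ℕ) = (j : ℕ) := by simpa [Fin.ext_iff] using hb
        have hbN : (b : ℕ) < N := b.isLt
        split_ifs <;> first | rfl | (exfalso; omega) | (exfalso; simp only [true_and] at *; omega)
      · simp
    · rw [if_neg hj0, if_neg hjN]
      have hjlt : (j : ℕ) < N := j.isLt
      rw [Finset.sum_eq_single (⟨(j : ℕ) - 1, by omega⟩ : Fin N)]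
      · simp only [Fin.val_mk]
        split_ifs <;> first | rfl | (exfalso; omega) | (exfalso; simp only [true_and] at *; omega)
      · intro b _ hb
        have hb' : ¬ (b : ℕ) = (j : ℕ) - 1 := by simpa [Fin.ext_iff] using hb
        have hbN : (b : ℕ) < N := b.isLt
        split_ifs <;> first | rfl | (exfalso; omega) | (exfalso; simp only [true_and] at *; omega)
      · simp

section DNaux

variable {N : ℕ} (hN : 3 ≤ N) (σ : Module.End ℂ (Fin N → ℂ))
variable (hσ : σ = Matrix.toLin' (Matrix.of fun j i : Fin N =>
      if (i : ℕ) < N - 2 ∧ (j : ℕ) = (i : ℕ) + 1 then (1 : ℂ)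
      else if (i : ℕ) = N - 2 ∧ (j : ℕ) = 0 then -1
      else if (i : ℕ) = N - 1 ∧ (j : ℕ) = N - 1 then -1 else 0))

include hN hσ

lemma DN_app (v : Fin N → ℂ) (j : Fin N) :
    σ v j =
    if (j : ℕ) = 0 then -v ⟨N - 2, by omega⟩
    else if (j : ℕ) = N - 1 then -v j
    else v ⟨(j : ℕ) - 1, by omega⟩ := by
  rw [hσ]; exact DN_apply hN v j

lemma DN_single_lt {i : Fin N} (hi : (i : ℕ) < N - 2) :
    σ (Pi.single i 1) = Pi.single (⟨(i : ℕ) + 1, by omega⟩ : Fin N) 1 := by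
  funext j
  rw [DN_app hN σ hσ]
  simp only [Pi.single_apply, Fin.ext_iff, Fin.val_mk]
  have := j.isLt
  split_ifs <;> first | rfl | omega | simp | (exfalso; omega)

lemma DN_single_mid :
    σ (Pi.single (⟨N - 2, by omega⟩ : Fin N) 1) = -Pi.single (⟨0, by omega⟩ : Fin N) 1 := by
  funext j
  rw [DN_app hN σ hσ]
  simp only [Pi.single_apply, Fin.ext_iff, Fin.val_mk, Pi.neg_apply]
  have := j.isLt
  split_ifs <;> first | rfl | omega | simp | (exfalso; omega)

lemma DN_single_last :
    σ (Pi.single (⟨N - 1, by omega⟩ : Fin N) 1) = -Pi.single (⟨N - 1, by omega⟩ : Fin N) 1 := by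
  funext j
  rw [DN_app hN σ hσ]
  simp only [Pi.single_apply, Fin.ext_iff, Fin.val_mk, Pi.neg_apply]
  have := j.isLt
  split_ifs <;> first | rfl | omega | simp | (exfalso; omega)

lemma DN_pow_single_zero (k : ℕ) (hk : k ≤ N - 2) :
    (σ ^ k) (Pi.single (⟨0, by omega⟩ : Fin N) 1) = Pi.single (⟨k, by omega⟩ : Fin N) 1 := by
  induction k with
  | zero => simp
  | succ k ih =>
    rw [pow_succ', Module.End.mul_apply, ih (by omega),
      DN_single_lt hN σ hσ (i := ⟨k, by omega⟩) (by exact (by omega : k < N - 2))]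

lemma DN_powN_single (i : Fin N) (hi : (i : ℕ) ≤ N - 2) :
    (σ ^ (N - 1)) (Pi.single i 1) = -Pi.single i 1 := by
  have h0 : (σ ^ (N - 1)) (Pi.single (⟨0, by omega⟩ : Fin N) 1)
      = -Pi.single (⟨0, by omega⟩ : Fin N) 1 := by
    have h : N - 1 = (N - 2) + 1 := by omega
    rw [h, pow_succ', Module.End.mul_apply, DN_pow_single_zero hN σ hσ (N - 2) le_rfl,
      DN_single_mid hN σ hσ]
  have hi' : (σ ^ (i : ℕ)) (Pi.single (⟨0, by omega⟩ : Fin N) 1) = Pi.single i 1 := by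
    rw [DN_pow_single_zero hN σ hσ (i : ℕ) hi, Fin.eta]
  rw [← hi', ← Module.End.mul_apply, ← pow_add, add_comm, pow_add, Module.End.mul_apply, h0,
    map_neg]

end DNaux
section DNaux2

variable {N : ℕ} (hN : 3 ≤ N) (σ : Module.End ℂ (Fin N → ℂ))
variable (hσ : σ = Matrix.toLin' (Matrix.of fun j i : Fin N =>
      if (i : ℕ) < N - 2 ∧ (j : ℕ) = (i : ℕ) + 1 then (1 : ℂ)
      else if (i : ℕ) = N - 2 ∧ (j : ℕ) = 0 then -1
      else if (i : ℕ) = N - 1 ∧ (j : ℕ) = N - 1 then -1 else 0))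

include hN hσ

lemma DN_eigen (lam : ℂ) (hlam : lam ^ (N - 1) = -1) :
    σ (fun j : Fin N => if (j : ℕ) < N - 1 then lam ^ (N - 2 - (j : ℕ)) else 0)
      = lam • (fun j : Fin N => if (j : ℕ) < N - 1 then lam ^ (N - 2 - (j : ℕ)) else 0) := by
  funext j
  rw [DN_app hN σ hσ]
  have hjlt := j.isLt
  by_cases hj0 : (j : ℕ) = 0
  · rw [if_pos hj0]
    simp only [Pi.smul_apply, smul_eq_mul, Fin.val_mk, hj0]
    rw [if_pos (by omega : N - 2 < N - 1), if_pos (by omega : 0 < N - 1)]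
    rw [show N - 2 - (N - 2) = 0 by omega, show N - 2 - 0 = N - 2 by omega, pow_zero,
      ← pow_succ', show N - 2 + 1 = N - 1 by omega, hlam]
  · by_cases hjN : (j : ℕ) = N - 1
    · rw [if_neg hj0, if_pos hjN]
      simp only [Pi.smul_apply, smul_eq_mul]
      rw [if_neg (by omega : ¬ (j : ℕ) < N - 1)]
      simp
    · rw [if_neg hj0, if_neg hjN]
      simp only [Pi.smul_apply, smul_eq_mul, Fin.val_mk]
      rw [if_pos (by omega : (j : ℕ) - 1 < N - 1), if_pos (by omega : (j : ℕ) < N - 1)]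
      rw [show N - 2 - ((j : ℕ) - 1) = (N - 2 - (j : ℕ)) + 1 by omega, pow_succ']

end DNaux2

lemma DN_eta_pow (N : ℕ) (hN : 3 ≤ N) :
    (Complex.exp (2 * Real.pi * Complex.I / (2 * N - 2))) ^ (N - 1) = -1 := by
  rw [← Complex.exp_nat_mul]
  have h1 : ((N : ℂ) - 1) ≠ 0 := by
    intro h
    have : (N : ℂ) = 1 := by linear_combination h
    have : N = 1 := by exact_mod_cast this
    omega
  have hcast : ((N - 1 : ℕ) : ℂ) = (N : ℂ) - 1 := by
    rw [Nat.cast_sub (by omega : 1 ≤ N)]; norm_num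
  have h2 : (2 * (N : ℂ) - 2) ≠ 0 := by
    intro h; apply h1; linear_combination h / 2
  rw [hcast, show ((N : ℂ) - 1) * (2 * (Real.pi : ℂ) * Complex.I / (2 * N - 2))
      = Real.pi * Complex.I by field_simp]
  exact Complex.exp_pi_mul_I
/-- The Coxeter transformation of type `D_N` (acting on `ℂ^N` by
`v_i ↦ v_{i+1}` for `1 ≤ i ≤ N-2`, `v_{N-1} ↦ -v₁`, `v_N ↦ -v_N`) has order
`h = 2N-2`, and its eigenvalues are exactly `η^{m_i}` where `η = e^{2πi/h}`,
`m_i = 2i - 1` for `1 ≤ i ≤ N-1` and `m_N = N-1`.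
(Indices are `0`-based: the basis vector `v_{i+1}` corresponds to `i : Fin N`.) -/
theorem coxeter_DN_order_and_eigenvalues (N : ℕ) (hN : 3 ≤ N)
    (σ : Module.End ℂ (Fin N → ℂ))
    (hσ : σ = Matrix.toLin' (Matrix.of fun j i : Fin N =>
      if (i : ℕ) < N - 2 ∧ (j : ℕ) = (i : ℕ) + 1 then (1 : ℂ)
      else if (i : ℕ) = N - 2 ∧ (j : ℕ) = 0 then -1
      else if (i : ℕ) = N - 1 ∧ (j : ℕ) = N - 1 then -1 else 0))
    (η : ℂ) (hη : η = Complex.exp (2 * Real.pi * Complex.I / (2 * N - 2)))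
    (m : Fin N → ℕ) (hm : ∀ i : Fin N, m i = if (i : ℕ) < N - 1 then 2 * (i : ℕ) + 1 else N - 1) :
    σ ^ (2 * N - 2) = 1 ∧
    (∀ k : ℕ, 0 < k → k < 2 * N - 2 → σ ^ k ≠ 1) ∧
    (∀ i : Fin N, Module.End.HasEigenvalue σ (η ^ m i)) ∧
    (∀ c : ℂ, Module.End.HasEigenvalue σ c → ∃ i : Fin N, c = η ^ m i) := by
  have hcast : ((2 * N - 2 : ℕ) : ℂ) = 2 * (N : ℂ) - 2 := by
    rw [Nat.cast_sub (by omega : 2 ≤ 2 * N)]; push_cast; ring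
  have hη' : IsPrimitiveRoot η (2 * N - 2) := by
    have h0 : (2 * N - 2 : ℕ) ≠ 0 := by omega
    have h := Complex.isPrimitiveRoot_exp (2 * N - 2) h0
    rwa [hcast, ← hη] at h
  have hηN : η ^ (N - 1) = -1 := by rw [hη]; exact DN_eta_pow N hN
  have hηne : η ≠ 0 := by rw [hη]; exact Complex.exp_ne_zero _
  -- eigenvector machinery
  have eigvec : ∀ lam : ℂ, lam ≠ 0 → lam ^ (N - 1) = -1 →
      Module.End.HasEigenvector σ lam
        (fun j : Fin N => if (j : ℕ) < N - 1 then lam ^ (N - 2 - (j : ℕ)) else 0) := by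
    intro lam hlne hlam
    refine ⟨Module.End.mem_eigenspace_iff.mpr (DN_eigen hN σ hσ lam hlam), ?_⟩
    intro hzero
    have h0 : (fun j : Fin N => if (j : ℕ) < N - 1 then lam ^ (N - 2 - (j : ℕ)) else 0)
        (⟨0, by omega⟩ : Fin N) = 0 := by rw [hzero]; rfl
    simp only [Fin.val_mk] at h0
    rw [if_pos (by omega : 0 < N - 1)] at h0
    exact pow_ne_zero _ hlne h0
  have hlast : Module.End.HasEigenvector σ (-1)
      (Pi.single (⟨N - 1, by omega⟩ : Fin N) (1 : ℂ)) := by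
    refine ⟨Module.End.mem_eigenspace_iff.mpr ?_, ?_⟩
    · rw [DN_single_last hN σ hσ]; module
    · intro hzero
      have := congrFun hzero (⟨N - 1, by omega⟩ : Fin N)
      simp at this
  -- part 1
  have part1 : σ ^ (2 * N - 2) = 1 := by
    refine Module.Basis.ext (Pi.basisFun ℂ (Fin N)) fun i => ?_
    rw [Pi.basisFun_apply, Module.End.one_apply]
    by_cases hi : (i : ℕ) ≤ N - 2
    · rw [show 2 * N - 2 = (N - 1) + (N - 1) by omega, pow_add, Module.End.mul_apply,
        DN_powN_single hN σ hσ i hi, map_neg, DN_powN_single hN σ hσ i hi, neg_neg]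
    · have hi' : i = ⟨N - 1, by omega⟩ := Fin.ext (by have := i.isLt; exact (by omega : (i : ℕ) = N - 1))
      have hstep : ∀ k : ℕ, (σ ^ k) (Pi.single (⟨N - 1, by omega⟩ : Fin N) (1 : ℂ))
          = ((-1 : ℂ) ^ k) • (Pi.single (⟨N - 1, by omega⟩ : Fin N) 1 : Fin N → ℂ) := by
        intro k
        induction k with
        | zero => simp
        | succ k ih =>
          rw [pow_succ', Module.End.mul_apply, ih, map_smul, DN_single_last hN σ hσ, smul_neg,
            ← neg_smul, pow_succ]
          congr 1
          ring
      rw [hi', hstep (2 * N - 2), Even.neg_one_pow ⟨N - 1, by omega⟩, one_smul]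
  refine ⟨part1, ?_, ?_, ?_⟩
  -- part 2
  · intro k hk0 hk2 hcon
    have hev := eigvec η hηne hηN
    have hp := hev.pow_apply k
    rw [hcon, Module.End.one_apply] at hp
    have h1 : η ^ k = 1 := by
      have h2 : η ^ k • (fun j : Fin N => if (j : ℕ) < N - 1 then η ^ (N - 2 - (j : ℕ)) else 0)
          = (1 : ℂ) • (fun j : Fin N => if (j : ℕ) < N - 1 then η ^ (N - 2 - (j : ℕ)) else 0) := by
        rw [one_smul]; exact hp.symm
      exact smul_left_injective ℂ hev.2 h2
    have hdvd := (hη'.pow_eq_one_iff_dvd k).mp h1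
    have := Nat.le_of_dvd hk0 hdvd
    omega
  -- part 3
  · intro i
    by_cases hi : (i : ℕ) < N - 1
    · have hmi : m i = 2 * (i : ℕ) + 1 := by rw [hm i, if_pos hi]
      have hlam : (η ^ m i) ^ (N - 1) = -1 := by
        rw [hmi, ← pow_mul, mul_comm (2 * (i : ℕ) + 1), pow_mul, hηN]
        exact Odd.neg_one_pow ⟨(i : ℕ), rfl⟩
      exact Module.End.hasEigenvalue_of_hasEigenvector
        (eigvec _ (pow_ne_zero _ hηne) hlam)
    · have hmi : m i = N - 1 := by rw [hm i, if_neg hi]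
      rw [hmi, hηN]
      exact Module.End.hasEigenvalue_of_hasEigenvector hlast
  -- part 4
  · intro c hc
    obtain ⟨v, hv⟩ := hc.exists_hasEigenvector
    have hE : σ ^ N + σ ^ (N - 1) + σ + 1 = 0 := by
      refine Module.Basis.ext (Pi.basisFun ℂ (Fin N)) fun i => ?_
      rw [Pi.basisFun_apply]
      simp only [LinearMap.add_apply, LinearMap.zero_apply, Module.End.one_apply]
      by_cases hi : (i : ℕ) ≤ N - 2
      · have hσN : (σ ^ N) (Pi.single i (1 : ℂ)) = -(σ (Pi.single i (1 : ℂ))) := by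
          have hNs : σ ^ N = σ ^ (N - 1) * σ := by rw [← pow_succ]; congr 1; omega
          rw [hNs, Module.End.mul_apply]
          by_cases hi2 : (i : ℕ) < N - 2
          · rw [DN_single_lt hN σ hσ hi2,
              DN_powN_single hN σ hσ _ (by exact (by omega : (i : ℕ) + 1 ≤ N - 2))]
          · have hieq : i = ⟨N - 2, by omega⟩ := Fin.ext (by have := i.isLt; exact (by omega : (i : ℕ) = N - 2))
            rw [hieq, DN_single_mid hN σ hσ, map_neg,
              DN_powN_single hN σ hσ _ (by exact (by omega : 0 ≤ N - 2)), neg_neg]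
        rw [hσN, DN_powN_single hN σ hσ i hi]
        abel
      · have hieq : i = ⟨N - 1, by omega⟩ := Fin.ext (by have := i.isLt; exact (by omega : (i : ℕ) = N - 1))
        have hNs : σ ^ N = σ ^ (N - 1) * σ := by rw [← pow_succ]; congr 1; omega
        rw [hieq, hNs, Module.End.mul_apply, DN_single_last hN σ hσ, map_neg]
        abel
    have hEv : (σ ^ N + σ ^ (N - 1) + σ + 1) v = 0 := by rw [hE]; rfl
    rw [LinearMap.add_apply, LinearMap.add_apply, LinearMap.add_apply, Module.End.one_apply,
      hv.pow_apply, hv.pow_apply, hv.apply_eq_smul] at hEv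
    have h5 : c ^ N + c ^ (N - 1) + c + 1 = 0 := by
      by_contra hne
      refine hv.2 ?_
      have h4 : (c ^ N + c ^ (N - 1) + c + 1) • v = 0 := by
        rw [add_smul, add_smul, add_smul, one_smul]; exact hEv
      exact (smul_eq_zero.mp h4).resolve_left hne
    have h6 : (c ^ (N - 1) + 1) * (c + 1) = 0 := by
      have hp : c ^ (N - 1) * c = c ^ N := by
        rw [← pow_succ]; congr 1; omega
      calc (c ^ (N - 1) + 1) * (c + 1) = c ^ (N - 1) * c + c ^ (N - 1) + c + 1 := by ring
        _ = c ^ N + c ^ (N - 1) + c + 1 := by rw [hp]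
        _ = 0 := h5
    rcases mul_eq_zero.mp h6 with h | h
    · have hc1 : c ^ (N - 1) = -1 := by linear_combination h
      have hcne : c ≠ 0 := by
        intro h0
        rw [h0, zero_pow (by omega : N - 1 ≠ 0)] at hc1
        exact absurd hc1 (by norm_num)
      haveI : NeZero (N - 1) := ⟨by omega⟩
      have hζ : IsPrimitiveRoot (Complex.exp (2 * Real.pi * Complex.I / ((N - 1 : ℕ) : ℂ)))
          (N - 1) := Complex.isPrimitiveRoot_exp _ (by omega)
      have hx : (c * η⁻¹) ^ (N - 1) = 1 := by
        rw [mul_pow, hc1, inv_pow, hηN]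
        norm_num
      obtain ⟨k, hk, hke⟩ := hζ.eq_pow_of_pow_eq_one hx
      have hζη : Complex.exp (2 * Real.pi * Complex.I / ((N - 1 : ℕ) : ℂ)) = η ^ 2 := by
        have h1 : ((N : ℂ) - 1) ≠ 0 := by
          intro hh
          have : (N : ℂ) = 1 := by linear_combination hh
          have : N = 1 := by exact_mod_cast this
          omega
        have h2 : (2 * (N : ℂ) - 2) ≠ 0 := by
          intro hh; apply h1; linear_combination hh / 2
        rw [hη, sq, ← Complex.exp_add, Nat.cast_sub (by omega : 1 ≤ N)]
        congr 1
        push_cast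
        field_simp
        ring
      have hck : c = η * (η ^ 2) ^ k := by
        rw [← hζη, hke]
        field_simp
      refine ⟨⟨k, by omega⟩, ?_⟩
      rw [hm, if_pos (by exact (by omega : k < N - 1)), hck, ← pow_mul, ← pow_succ']
    · have hc1 : c = -1 := by linear_combination h
      refine ⟨⟨N - 1, by omega⟩, ?_⟩
      rw [hm, if_neg (by exact (by omega : ¬ N - 1 < N - 1)), hc1]
      exact hηN.symm
end

section
/- Let H be a complex inner product space (positive definite Hermitian form), and let Ω_m (m ∈ ℤ) be linear operators on H such that the Hermitian adjoint of Ω_{-m} is Ω_m for every m. Suppose Ω_KW is an operator satisfying -4 Ω_KW = (1/2)Ω₀² + Σ_{m=1}^{M} Ω_{-m}Ω_m (finite sum sufficing on a given vector). If v ∈ H satisfies Ω_KW(v) = 0, then Ω_m(v) = 0 for all m ≥ 0. -/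
/-!
Pairing the Casimir identity with `v` and moving each `Ω_{-m}` across the inner product turns
`0 = ⟪v, -4 Ω_KW v⟫` into `0 = ½‖Ω₀ v‖² + ∑_{m=1}^{M} ‖Ω_m v‖²`, a sum of nonnegative terms,
each of which must therefore vanish.
-/

open scoped InnerProductSpace

theorem inner_map_map_self_eq_norm_sq {𝕜 E : Type*} [RCLike 𝕜] [NormedAddCommGroup E]
    [InnerProductSpace 𝕜 E] {S T : E →ₗ[𝕜] E} (hST : ∀ x y, ⟪S x, y⟫_𝕜 = ⟪x, T y⟫_𝕜) (v : E) :
    ⟪v, S (T v)⟫_𝕜 = (‖T v‖ : 𝕜) ^ 2 := by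
  rw [← inner_conj_symm, hST, inner_self_eq_norm_sq_to_K, map_pow, RCLike.conj_ofReal]

/-- Positivity argument: if operators `Ω_m` on a complex inner product space satisfy
`adjoint(Ω_{-m}) = Ω_m` (i.e. `⟪Ω_{-m}x, y⟫ = ⟪x, Ω_m y⟫`), and
`-4·Ω_KW v = (1/2)Ω₀(Ω₀ v) + Σ_{m=1}^{M} Ω_{-m}(Ω_m v)` on a vector `v` with
`Ω_KW v = 0`, then `Ω_m v = 0` for all `m` with `0 ≤ m ≤ M`. -/
theorem casimir_positivity {H : Type*} [NormedAddCommGroup H] [InnerProductSpace ℂ H]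
    (Ω : ℤ → H →ₗ[ℂ] H)
    (hadj : ∀ (m : ℤ) (x y : H), (inner ℂ (Ω (-m) x) y : ℂ) = inner ℂ x (Ω m y))
    (ΩKW : H →ₗ[ℂ] H) (M : ℕ) (v : H)
    (hcasimir : (-4 : ℂ) • ΩKW v
        = (1 / 2 : ℂ) • Ω 0 (Ω 0 v) + ∑ m ∈ Finset.Icc 1 M, Ω (-(m : ℤ)) (Ω (m : ℤ) v))
    (hv : ΩKW v = 0) :
    ∀ m : ℕ, m ≤ M → Ω (m : ℤ) v = 0 := by
  have hnorm (m : ℤ) : ⟪v, Ω (-m) (Ω m v)⟫_ℂ = (‖Ω m v‖ : ℂ) ^ 2 :=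
    inner_map_map_self_eq_norm_sq (hadj m) v
  have hzero : (1 / 2 : ℝ) * ‖Ω 0 v‖ ^ 2 + ∑ m ∈ Finset.Icc 1 M, ‖Ω m v‖ ^ 2 = 0 := by
    have hnorm₀ : ⟪v, Ω 0 (Ω 0 v)⟫_ℂ = (‖Ω 0 v‖ : ℂ) ^ 2 := by simpa using hnorm 0
    have h := congrArg (⟪v, ·⟫_ℂ) hcasimir
    simp only [hv, smul_zero, inner_zero_right, inner_add_right, inner_smul_right, inner_sum,
      hnorm, hnorm₀] at h
    apply Complex.ofReal_injective
    push_cast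
    exact h.symm
  obtain ⟨hzero₀, hzero_sum⟩ := (add_eq_zero_iff_of_nonneg (by positivity)
    (Finset.sum_nonneg fun _ _ => by positivity)).mp hzero
  intro m hm
  rcases m.eq_zero_or_pos with rfl | hpos
  · simpa using hzero₀
  · have := (Finset.sum_eq_zero_iff_of_nonneg fun _ _ => by positivity).mp hzero_sum m
      (Finset.mem_Icc.mpr ⟨hpos, hm⟩)
    simpa using this
end
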